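/- For all m, n ∈ ℤ and every vector u ∈ V, the operators of the representation π satisfy [H(m), Y(n)]u = −2·Y(m+n)u. -/

import Mathlib

open MvPolynomial

/-- The semi-infinite wedge space `Λ`: complex vector space with basis `v_{S,T}`
indexed by pairs `(S, T)` of finite subsets of the positive integers.  The basis
vector `v_{S,T}` encodes the semi-infinite wedge product with support
`supp(S,T) = {-s-1/2 : s ∈ S} ∪ {-1/2} ∪ {k+1/2 : k ∈ ℤ_{≥1}, k ∉ T} ⊆ ℤ + 1/2`. -/
abbrev Wedge : Type := (Finset ℕ+ × Finset ℕ+) →₀ ℂ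

/-- Image of the basis vector `v_{S,T}` under the operator `A(m)` (for `m ∈ ℤ + 1/2`,
i.e. a rational with denominator `2`; `A(m) := 0` for other rationals).
`A(m) v_{S,T} = 0` if `m ∈ supp(S,T)` or `m = 1/2`; otherwise
`A(m) v_{S,T} = (m - 1/2) ⬝ (-1)^j ⬝ v_{S',T'}` where `j = #{i ∈ supp(S,T) : i < m}`
and `supp(S',T') = supp(S,T) ∪ {m}`.  Writing `m = n + 1/2` with `n = ⌊m⌋ ∈ ℤ`:
if `n ≥ 1` then `m ∈ supp(S,T)` iff `n ∉ T`, and the new support corresponds to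
`(S, T \ {n})` with sign exponent `j = |S| + n - #{t ∈ T : t < n}`;
if `n ≤ -2` then `m = -s - 1/2` with `s = -n-1 ≥ 1`, `m ∈ supp(S,T)` iff `s ∈ S`,
and the new support corresponds to `(S ∪ {s}, T)` with `j = #{s' ∈ S : s' > s}`;
if `n = 0` (`m = 1/2`) or `n = -1` (`m = -1/2 ∈ supp(S,T)`) the result is `0`. -/
noncomputable def Abasis (m : ℚ) (ST : Finset ℕ+ × Finset ℕ+) : Wedge :=
  if m.den = 2 then
    let n : ℤ := ⌊m⌋
    if hn : 1 ≤ n then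
      let k : ℕ+ := ⟨n.toNat, by omega⟩
      if k ∈ ST.2 then
        (((n : ℂ)) * (-1) ^ (ST.1.card + n.toNat - (ST.2.filter (· < k)).card)) •
          Finsupp.single (ST.1, ST.2.erase k) (1 : ℂ)
      else 0
    else if hn' : n ≤ -2 then
      let s : ℕ+ := ⟨(-n - 1).toNat, by omega⟩
      if s ∈ ST.1 then 0
      else
        (((n : ℂ)) * (-1) ^ ((ST.1.filter (s < ·)).card)) •
          Finsupp.single (insert s ST.1, ST.2) (1 : ℂ)
    else 0
  else 0

/-- Image of the basis vector `v_{S,T}` under the operator `A*(m)` (for `m ∈ ℤ + 1/2`).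
`A*(m) v_{S,T} = 0` if `-m ∉ supp(S,T)` or `m = 1/2`; otherwise
`A*(m) v_{S,T} = (m - 1/2) ⬝ (-1)^{j'} ⬝ v_{S'',T''}` where
`j' = #{i ∈ supp(S,T) : i < -m}` and `supp(S'',T'') = supp(S,T) \ {-m}`.
Writing `m = n + 1/2`, `n = ⌊m⌋`: if `n ≥ 1` then `-m = -n - 1/2 ∈ supp(S,T)` iff
`n ∈ S`, new pair `(S \ {n}, T)`, `j' = #{s' ∈ S : s' > n}`; if `n ≤ -2` then
`-m = k + 1/2` with `k = -n-1 ≥ 1`, `-m ∈ supp(S,T)` iff `k ∉ T`, new pair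
`(S, T ∪ {k})`, `j' = |S| + k - #{t ∈ T : t < k}`; otherwise `0`. -/
noncomputable def AstarBasis (m : ℚ) (ST : Finset ℕ+ × Finset ℕ+) : Wedge :=
  if m.den = 2 then
    let n : ℤ := ⌊m⌋
    if hn : 1 ≤ n then
      let s : ℕ+ := ⟨n.toNat, by omega⟩
      if s ∈ ST.1 then
        (((n : ℂ)) * (-1) ^ ((ST.1.filter (s < ·)).card)) •
          Finsupp.single (ST.1.erase s, ST.2) (1 : ℂ)
      else 0
    else if hn' : n ≤ -2 then
      let k : ℕ+ := ⟨(-n - 1).toNat, by omega⟩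
      if k ∈ ST.2 then 0
      else
        (((n : ℂ)) * (-1) ^ (ST.1.card + (-n - 1).toNat - (ST.2.filter (· < k)).card)) •
          Finsupp.single (ST.1, insert k ST.2) (1 : ℂ)
    else 0
  else 0

/-- The operator `A(m)` on the semi-infinite wedge space `Λ`, extended linearly. -/
noncomputable def Aop (m : ℚ) : Wedge →ₗ[ℂ] Wedge :=
  Finsupp.lsum ℂ fun ST => LinearMap.toSpanSingleton ℂ Wedge (Abasis m ST)

/-- The operator `A*(m)` on the semi-infinite wedge space `Λ`, extended linearly. -/
noncomputable def AstarOp (m : ℚ) : Wedge →ₗ[ℂ] Wedge :=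
  Finsupp.lsum ℂ fun ST => LinearMap.toSpanSingleton ℂ Wedge (AstarBasis m ST)

/-- The Fock space `F = ℂ[x_1, x_2, ...]`, a polynomial ring in countably many
variables indexed by the positive integers. -/
abbrev Fock : Type := MvPolynomial ℕ+ ℂ

/-- Endomorphisms of the Fock space. -/
abbrev EndF : Type := Module.End ℂ Fock

/-- The Heisenberg operators on the Fock space: `H(-n)` is multiplication by `x_n`
and `H(n) = -4n ∂/∂x_n` for `n ≥ 1` (and `0` for `n = 0`, which is never used). -/
noncomputable def HF (n : ℤ) : EndF :=
  if hn : 1 ≤ n then ((-4 : ℂ) * (n : ℂ)) • (pderiv (⟨n.toNat, by omega⟩ : ℕ+)).toLinearMap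
  else if hn' : n ≤ -1 then LinearMap.mulLeft ℂ (X (⟨(-n).toNat, by omega⟩ : ℕ+))
  else 0

/-- `sgn true = -1`, `sgn false = 1`: the sign `∓` attached to the label `ε ∈ {+, -}`
(`ε = +` is `true`), as in `E^±_+(z) = exp(∓ Σ_{n>0} x_n z^n / (2n))`. -/
def sgn (ε : Bool) : ℂ := if ε then -1 else 1

/-- The coefficient of `z^k` in the exponential `exp(g(z)) = Σ_j g(z)^j / j!` of an
operator-valued formal power series `g` (with zero constant term, so that only the
terms `j ≤ k` contribute to the coefficient of `z^k`). -/
noncomputable def expCoeff (g : PowerSeries EndF) (k : ℕ) : EndF :=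
  ∑ j ∈ Finset.range (k + 1), ((j.factorial : ℂ))⁻¹ • (PowerSeries.coeff (R := EndF) k (g ^ j))

/-- The series `∓ Σ_{n > 0} x_n z^n / (2n)` (multiplication operators). -/
noncomputable def dSeries (ε : Bool) : PowerSeries EndF :=
  PowerSeries.mk fun n =>
    if hn : 0 < n then sgn ε • (((2 * n : ℂ))⁻¹ • LinearMap.mulLeft ℂ (X (⟨n, hn⟩ : ℕ+)))
    else 0

/-- The series `∓ 2 Σ_{n > 0} (∂/∂x_n) w^n`, where `w` stands for `z^{-1}`. -/
noncomputable def cSeries (ε : Bool) : PowerSeries EndF :=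
  PowerSeries.mk fun n =>
    if hn : 0 < n then sgn ε • ((2 : ℂ) • (pderiv (⟨n, hn⟩ : ℕ+)).toLinearMap)
    else 0

/-- `d^ε_l`, the coefficient of `z^l` in `E^ε_+(z) = exp(∓ Σ_{n>0} x_n z^n/(2n))`. -/
noncomputable def dOp (ε : Bool) (l : ℕ) : EndF := expCoeff (dSeries ε) l

/-- `c^ε_k`, the coefficient of `z^{-k}` in `E^ε_-(z) = exp(∓ 2 Σ_{n>0} (∂/∂x_n) z^{-n})`. -/
noncomputable def cOp (ε : Bool) (k : ℕ) : EndF := expCoeff (cSeries ε) k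

/-- The space `V = F ⊗ Λ ⊗ ℂ[ℤα]`, realized as finitely supported functions from
the basis `{v_{S,T} ⊗ e^{pα}}` of `Λ ⊗ ℂ[ℤα]` to the Fock space `F`:
the index `((S,T), p)` records the basis vector `v_{S,T} ⊗ e^{pα}` and the value
is the `F`-coordinate, so `Finsupp.single ((S,T), p) f` is `f ⊗ v_{S,T} ⊗ e^{pα}`. -/
abbrev VV : Type := ((Finset ℕ+ × Finset ℕ+) × ℤ) →₀ Fock

/-- `emb w p f` is the element `f ⊗ w ⊗ e^{pα}` of `V` for `w ∈ Λ`. -/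
noncomputable def emb (w : Wedge) (p : ℤ) (f : Fock) : VV :=
  w.sum fun ST c => Finsupp.single (ST, p) (c • f)

/-- The operator `X(m)` of the representation `π` on `V`:
`X(m)(f ⊗ v_{S,T} ⊗ e^{pα}) = Σ_{l,k ≥ 0} (d^+_l c^+_k f) ⊗ A(m+l-k-p-1/2) v_{S,T} ⊗ e^{(p+1)α}`
(only finitely many summands are nonzero on each vector). -/
noncomputable def Xop (m : ℤ) : VV → VV := fun u =>
  u.sum fun STp f =>
    ∑ᶠ lk : ℕ × ℕ,
      emb (Abasis ((m : ℚ) + lk.1 - lk.2 - STp.2 - 1/2) STp.1) (STp.2 + 1)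
        (dOp true lk.1 (cOp true lk.2 f))

/-- The operator `Y(m)` of the representation `π` on `V`:
`Y(m)(f ⊗ v_{S,T} ⊗ e^{pα}) = Σ_{l,k ≥ 0} (d^-_l c^-_k f) ⊗ A*(m+l-k+p-1/2) v_{S,T} ⊗ e^{(p-1)α}`. -/
noncomputable def Yop (m : ℤ) : VV → VV := fun u =>
  u.sum fun STp f =>
    ∑ᶠ lk : ℕ × ℕ,
      emb (AstarBasis ((m : ℚ) + lk.1 - lk.2 + STp.2 - 1/2) STp.1) (STp.2 - 1)
        (dOp false lk.1 (cOp false lk.2 f))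

/-- The operator `H(m)` of the representation `π` on `V`: for `m ≠ 0` it acts as
`H(m)` on the Fock factor, and `H(0)` acts on `f ⊗ v ⊗ e^{pα}` by the scalar `2p`. -/
noncomputable def HVop (m : ℤ) : VV → VV := fun u =>
  u.sum fun STp f =>
    Finsupp.single STp (if m = 0 then ((2 : ℂ) * (STp.2 : ℂ)) • f else HF m f)

/-- The weight of a monomial `x₁^{a₁} x₂^{a₂} ⋯`, namely `Σ n aₙ`. -/
def wtMon (μ : ℕ+ →₀ ℕ) : ℚ := μ.sum fun n a => (n : ℚ) * a

/-- The degree of the basis vector `v_{S,T}` of `Λ`: `Σ_{s∈S} s + Σ_{t∈T} t`. -/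
def degWedge (ST : Finset ℕ+ × Finset ℕ+) : ℚ :=
  (∑ s ∈ ST.1, (s : ℚ)) + ∑ t ∈ ST.2, (t : ℚ)

/-- The degree operator `d` of the representation `π` on `V`:
`d (f ⊗ v_{S,T} ⊗ e^{pα}) = (-wt(f) - deg(v_{S,T}) - p²/2) ⬝ (f ⊗ v_{S,T} ⊗ e^{pα})`
on monomials `f`. -/
noncomputable def dV : VV → VV := fun u =>
  u.sum fun STp f =>
    Finsupp.single STp
      (∑ μ ∈ f.support,
        monomial μ
          ((((-(wtMon μ) - degWedge STp.1 - (STp.2 : ℚ) ^ 2 / 2 : ℚ) : ℂ)) * coeff μ f))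

/-- The vacuum space `Ω = Λ ⊗ ℂ[ℤα]`, with basis `{v_{S,T} ⊗ e^{pα}}`. -/
abbrev Vac : Type := ((Finset ℕ+ × Finset ℕ+) × ℤ) →₀ ℂ

/-- `embVac w p` is the element `w ⊗ e^{pα}` of `Ω` for `w ∈ Λ`. -/
noncomputable def embVac (w : Wedge) (p : ℤ) : Vac :=
  w.sum fun ST c => Finsupp.single (ST, p) c

/-- The operator `Z⁺(m)` on `Ω`: `Z⁺(m)(v ⊗ e^{pα}) = A(m-p-1/2)v ⊗ e^{(p+1)α}`. -/
noncomputable def Zplus (m : ℤ) : Vac → Vac := fun u =>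
  u.sum fun STp c => c • embVac (Abasis ((m : ℚ) - STp.2 - 1/2) STp.1) (STp.2 + 1)

/-- The operator `Z⁻(m)` on `Ω`: `Z⁻(m)(v ⊗ e^{pα}) = A*(m+p-1/2)v ⊗ e^{(p-1)α}`. -/
noncomputable def Zminus (m : ℤ) : Vac → Vac := fun u =>
  u.sum fun STp c => c • embVac (AstarBasis ((m : ℚ) + STp.2 - 1/2) STp.1) (STp.2 - 1)

/-- Extension to `V = F ⊗ Λ ⊗ ℂ[ℤα]` of an operator `e` on the Fock factor,
i.e. `e ⊗ 1 ⊗ 1`. -/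
noncomputable def extF (e : EndF) : VV → VV := fun u =>
  u.sum fun STp f => Finsupp.single STp (e f)

/-- The operator `Z⁺(m) = Σ_{a,b≥0} (d⁻_a ⊗ 1 ⊗ 1) ∘ X(m+a-b) ∘ (c⁻_b ⊗ 1 ⊗ 1)` on `V`,
the coefficient of `z^{-m}` in `E⁻₊(z) X(z) E⁻₋(z)` (only finitely many summands act
nontrivially on each vector). -/
noncomputable def ZplusV (m : ℤ) : VV → VV := fun u =>
  ∑ᶠ ab : ℕ × ℕ,
    extF (dOp false ab.1) (Xop (m + (ab.1 : ℤ) - (ab.2 : ℤ)) (extF (cOp false ab.2) u))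

/-- The operator `Z⁻(m) = Σ_{a,b≥0} (d⁺_a ⊗ 1 ⊗ 1) ∘ Y(m+a-b) ∘ (c⁺_b ⊗ 1 ⊗ 1)` on `V`,
the coefficient of `z^{-m}` in `E⁺₊(z) Y(z) E⁺₋(z)`. -/
noncomputable def ZminusV (m : ℤ) : VV → VV := fun u =>
  ∑ᶠ ab : ℕ × ℕ,
    extF (dOp true ab.1) (Yop (m + (ab.1 : ℤ) - (ab.2 : ℤ)) (extF (cOp true ab.2) u))

/-- `Ncount j` is the number of quadruples `(a, S, T, p)` with `a : ℤ_{≥1} → ℤ_{≥0}`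
finitely supported, `S, T` finite subsets of the positive integers and `p ∈ ℤ`,
satisfying `2 Σ_{n≥1} n a(n) + 2 (Σ_{s∈S} s + Σ_{t∈T} t) + p² = j`; this is the
dimension of the eigenspace of `d` with eigenvalue `-j/2` on `V`. -/
noncomputable def Ncount (j : ℕ) : ℕ :=
  Nat.card {q : (ℕ+ →₀ ℕ) × Finset ℕ+ × Finset ℕ+ × ℤ //
    2 * (q.1.sum fun n a => (n : ℤ) * a) +
      2 * ((∑ s ∈ q.2.1, (s : ℤ)) + ∑ t ∈ q.2.2.1, (t : ℤ)) + q.2.2.2 ^ 2 = (j : ℤ)}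

/-!
For `m ≠ 0`, `H(m)` acts on the Fock factor only. If `m = i > 0` it is `-4i ∂/∂x_i`, which commutes
with every `c⁻_k` and has commutator `-2` with the coefficient `x_i/(2i)` of the exponent of
`E⁻₊(z)`; as the commutator with a fixed operator is a derivation, this gives
`[H(i), d⁻_l] = -2 d⁻_{l-i}`. Symmetrically, if `m = -i < 0` then `H(m) = x_i` commutes with every
`d⁻_l` and `[x_i, c⁻_k] = -2 c⁻_{k-i}`. Finally `H(0)` is the charge operator `2p` and `Y(n)`
lowers the charge by one, so `[H(0), Y(n)] = -2 Y(n)`. In each case the `(l, k)`-summand of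
`[H(m), Y(n)]` is `-2` times a summand of `Y(m + n)`, with index `(l - m, k)` or `(l, k + m)`,
and reindexing the (finite) sums gives the claim.
-/

theorem mul_pow_succ_sub_pow_succ_mul {A : Type*} [Ring A] {a g z : A}
    (h : a * g - g * a = z) (hz : Commute z g) (j : ℕ) :
    a * g ^ (j + 1) - g ^ (j + 1) * a = (j + 1) • (z * g ^ j) := by
  induction j with
  | zero => simpa using h
  | succ j ih =>
    calc a * g ^ (j + 2) - g ^ (j + 2) * a
        = (a * g ^ (j + 1) - g ^ (j + 1) * a) * g + g ^ (j + 1) * (a * g - g * a) := by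
          simp only [pow_succ, mul_sub, sub_mul, mul_assoc]; abel
      _ = (j + 2) • (z * g ^ (j + 1)) := by
          rw [ih, h, ((hz.pow_right (j + 1)).eq).symm, smul_mul_assoc, mul_assoc, ← pow_succ,
            ← succ_nsmul]

theorem PowerSeries.coeff_pow_eq_zero_of_lt {R : Type*} [Semiring R] {g : PowerSeries R}
    (hg : constantCoeff g = 0) {j l : ℕ} (hl : l < j) : coeff l (g ^ j) = 0 :=
  coeff_of_lt_order _ ((Nat.cast_lt.mpr hl).trans_le (le_order_pow_of_constantCoeff_eq_zero j hg))

theorem finsum_eq_finsum_comp_of_support_subset_range {α β M : Type*} [AddCommMonoid M]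
    {e : α → β} (he : Function.Injective e) {F : β → M} (hF : Function.support F ⊆ Set.range e) :
    ∑ᶠ b, F b = ∑ᶠ a, F (e a) := by
  rw [← finsum_mem_range he, finsum_mem_def, Set.indicator_eq_self.mpr hF]

section Derivations

variable {σ R : Type*} [CommRing R]

theorem MvPolynomial.pderiv_mul_mulLeft_X_sub [DecidableEq σ] (i j : σ) :
    ((pderiv i).toLinearMap : Module.End R (MvPolynomial σ R)) * LinearMap.mulLeft R (X j)
      - LinearMap.mulLeft R (X j) * (pderiv i).toLinearMap = if i = j then 1 else 0 := by
  refine LinearMap.ext fun f => ?_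
  simp only [LinearMap.sub_apply, Module.End.mul_apply, LinearMap.mulLeft_apply,
    Derivation.coeFn_coe, pderiv_mul, pderiv_X]
  split_ifs with h <;> simp [h]

theorem MvPolynomial.commute_pderiv_pderiv (i j : σ) :
    Commute ((pderiv i).toLinearMap : Module.End R (MvPolynomial σ R)) (pderiv j).toLinearMap := by
  classical
  by_cases h : i = j
  · rw [h]
  refine LinearMap.ext fun f => MvPolynomial.ext _ _ fun μ => ?_
  simp only [Module.End.mul_apply, Derivation.coeFn_coe, coeff_pderiv, Finsupp.add_apply,
    Finsupp.single_eq_of_ne h, Finsupp.single_eq_of_ne (Ne.symm h), add_zero,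
    add_right_comm μ (Finsupp.single i 1)]
  ring

end Derivations

theorem expCoeff_eq_sum_range {g : PowerSeries EndF} (hg : PowerSeries.constantCoeff g = 0)
    {l N : ℕ} (hN : l < N) :
    expCoeff g l = ∑ j ∈ Finset.range N, ((j.factorial : ℂ))⁻¹ • PowerSeries.coeff l (g ^ j) := by
  refine Finset.sum_subset (Finset.range_subset_range.mpr hN) fun j _ hj => ?_
  rw [PowerSeries.coeff_pow_eq_zero_of_lt hg (by simpa using hj), smul_zero]

theorem commute_expCoeff {H : EndF} {g : PowerSeries EndF}
    (hHg : ∀ k, Commute H (PowerSeries.coeff k g)) (l : ℕ) : Commute H (expCoeff g l) := by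
  have hC : Commute (PowerSeries.C H) g := PowerSeries.ext fun k => by
    rw [PowerSeries.coeff_C_mul, PowerSeries.coeff_mul_C]; exact hHg k
  refine Commute.sum_right _ _ _ fun j _ => Commute.smul_right ?_ _
  simpa [Commute, SemiconjBy, PowerSeries.coeff_C_mul, PowerSeries.coeff_mul_C] using
    congrArg (PowerSeries.coeff l) (hC.pow_right j).eq

theorem expCoeff_commutator {H : EndF} {g : PowerSeries EndF} {c : ℂ} {m₀ : ℕ} (hm₀ : 0 < m₀)
    (hg : PowerSeries.constantCoeff g = 0)
    (hHg : ∀ k, H * PowerSeries.coeff k g - PowerSeries.coeff k g * H = if k = m₀ then c • 1 else 0)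
    (l : ℕ) :
    H * expCoeff g l - expCoeff g l * H = if m₀ ≤ l then c • expCoeff g (l - m₀) else 0 := by
  have hC : PowerSeries.C H * g - g * PowerSeries.C H = c • PowerSeries.X ^ m₀ :=
    PowerSeries.ext fun k => by
      rw [map_sub, PowerSeries.coeff_C_mul, PowerSeries.coeff_mul_C, hHg, PowerSeries.coeff_smul,
        PowerSeries.coeff_X_pow]
      split_ifs <;> simp
  have hpow (j : ℕ) : H * PowerSeries.coeff l (g ^ (j + 1)) - PowerSeries.coeff l (g ^ (j + 1)) * H
      = ((j + 1 : ℕ) : ℂ) • c • if m₀ ≤ l then PowerSeries.coeff (l - m₀) (g ^ j) else 0 := by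
    have := congrArg (PowerSeries.coeff l) <| mul_pow_succ_sub_pow_succ_mul hC
      ((PowerSeries.commute_X_pow g m₀).symm.smul_left c) j
    rwa [map_sub, PowerSeries.coeff_C_mul, PowerSeries.coeff_mul_C, ← Nat.cast_smul_eq_nsmul ℂ,
      PowerSeries.coeff_smul, smul_mul_assoc, PowerSeries.coeff_smul,
      PowerSeries.coeff_X_pow_mul'] at this
  have hfact (j : ℕ) :
      (((j + 1).factorial : ℂ))⁻¹ * ((j + 1 : ℕ) : ℂ) = ((j.factorial : ℂ))⁻¹ := by
    rw [Nat.factorial_succ, Nat.cast_mul, mul_inv, mul_comm, ← mul_assoc,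
      mul_inv_cancel₀ (Nat.cast_ne_zero.mpr j.succ_ne_zero), one_mul]
  calc H * expCoeff g l - expCoeff g l * H
      = ∑ j ∈ Finset.range (l + 1), ((j.factorial : ℂ))⁻¹ •
          (H * PowerSeries.coeff l (g ^ j) - PowerSeries.coeff l (g ^ j) * H) := by
        simp only [expCoeff, Finset.mul_sum, Finset.sum_mul, mul_smul_comm, smul_mul_assoc,
          smul_sub, Finset.sum_sub_distrib]
    _ = ∑ j ∈ Finset.range l, ((j.factorial : ℂ))⁻¹ • c •
          if m₀ ≤ l then PowerSeries.coeff (l - m₀) (g ^ j) else 0 := by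
        have h1 : H * PowerSeries.coeff l (g ^ 0) - PowerSeries.coeff l (g ^ 0) * H = 0 := by
          rw [pow_zero, PowerSeries.coeff_one]; split_ifs <;> simp
        simp only [Finset.sum_range_succ', h1, smul_zero, add_zero, hpow, smul_smul, ← mul_assoc,
          hfact]
    _ = if m₀ ≤ l then c • expCoeff g (l - m₀) else 0 := by
        split_ifs with hl
        · rw [expCoeff_eq_sum_range hg (show l - m₀ < l by omega), Finset.smul_sum]
          simp only [smul_comm c]
        · simp

theorem HF_pnat (i : ℕ+) : HF (i : ℕ) = ((-4 : ℂ) * (i : ℕ)) • ((pderiv i).toLinearMap : EndF) := by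
  rw [HF, dif_pos (by exact_mod_cast i.pos), Int.cast_natCast]
  rfl

theorem HF_neg_pnat (i : ℕ+) : HF (-(i : ℕ)) = (LinearMap.mulLeft ℂ (X i : Fock) : EndF) := by
  have hi : (1 : ℤ) ≤ (i : ℕ) := by exact_mod_cast i.pos
  rw [HF, dif_neg (by omega), dif_pos (by omega)]
  simp only [neg_neg, Int.toNat_natCast]
  rfl

theorem coeff_dSeries_false (i : ℕ+) :
    PowerSeries.coeff i (dSeries false) =
      ((2 * (i : ℕ) : ℂ))⁻¹ • (LinearMap.mulLeft ℂ (X i : Fock) : EndF) := by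
  simp only [dSeries, PowerSeries.coeff_mk, dif_pos i.pos, sgn, Bool.false_eq_true, if_false,
    one_smul]
  rfl

theorem coeff_cSeries_false (i : ℕ+) :
    PowerSeries.coeff i (cSeries false) = (2 : ℂ) • ((pderiv i).toLinearMap : EndF) := by
  simp only [cSeries, PowerSeries.coeff_mk, dif_pos i.pos, sgn, Bool.false_eq_true, if_false,
    one_smul]
  rfl

theorem constantCoeff_dSeries (ε : Bool) : PowerSeries.constantCoeff (dSeries ε) = 0 := by
  simp [← PowerSeries.coeff_zero_eq_constantCoeff_apply, dSeries]

theorem constantCoeff_cSeries (ε : Bool) : PowerSeries.constantCoeff (cSeries ε) = 0 := by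
  simp [← PowerSeries.coeff_zero_eq_constantCoeff_apply, cSeries]

theorem HF_mul_dOp_sub (i : ℕ+) (l : ℕ) :
    HF (i : ℕ) * dOp false l - dOp false l * HF (i : ℕ)
      = if (i : ℕ) ≤ l then (-2 : ℂ) • dOp false (l - i) else 0 := by
  refine expCoeff_commutator i.pos (constantCoeff_dSeries false) (fun k => ?_) l
  rcases k.eq_zero_or_pos with rfl | hk
  · simp [PowerSeries.coeff_zero_eq_constantCoeff_apply, constantCoeff_dSeries, i.ne_zero.symm]
  lift k to ℕ+ using hk
  refine LinearMap.ext fun f => ?_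
  simp only [coeff_dSeries_false, HF_pnat, LinearMap.sub_apply, Module.End.mul_apply,
    LinearMap.smul_apply, map_smul, LinearMap.mulLeft_apply, Derivation.coeFn_coe, pderiv_mul,
    pderiv_X, Pi.single_apply, PNat.coe_inj]
  split_ifs with h
  · subst h
    have : ((k : ℕ) : ℂ) ≠ 0 := Nat.cast_ne_zero.mpr k.ne_zero
    simp only [one_mul, LinearMap.smul_apply, Module.End.one_apply]
    match_scalars <;> field_simp <;> ring
  · simp only [zero_mul, zero_add, smul_comm (2 * ((k : ℕ) : ℂ))⁻¹, sub_self, LinearMap.zero_apply]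

theorem HF_neg_mul_cOp_sub (i : ℕ+) (k : ℕ) :
    HF (-(i : ℕ)) * cOp false k - cOp false k * HF (-(i : ℕ))
      = if (i : ℕ) ≤ k then (-2 : ℂ) • cOp false (k - i) else 0 := by
  refine expCoeff_commutator i.pos (constantCoeff_cSeries false) (fun j => ?_) k
  rcases j.eq_zero_or_pos with rfl | hj
  · simp [PowerSeries.coeff_zero_eq_constantCoeff_apply, constantCoeff_cSeries, i.ne_zero.symm]
  lift j to ℕ+ using hj
  refine LinearMap.ext fun f => ?_
  simp only [coeff_cSeries_false, HF_neg_pnat, LinearMap.sub_apply, Module.End.mul_apply,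
    LinearMap.smul_apply, map_smul, LinearMap.mulLeft_apply, Derivation.coeFn_coe, pderiv_mul,
    pderiv_X, Pi.single_apply, PNat.coe_inj]
  split_ifs with h h' h'
  · simp only [one_mul, LinearMap.smul_apply, Module.End.one_apply]
    module
  · exact absurd h.symm h'
  · exact absurd h'.symm h
  · simp

theorem commute_HF_cOp (i : ℕ+) (k : ℕ) : Commute (HF (i : ℕ)) (cOp false k) := by
  refine commute_expCoeff (fun j => ?_) k
  rcases j.eq_zero_or_pos with rfl | hj
  · simp [PowerSeries.coeff_zero_eq_constantCoeff_apply, constantCoeff_cSeries]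
  lift j to ℕ+ using hj
  rw [coeff_cSeries_false, HF_pnat]
  exact ((commute_pderiv_pderiv _ _).smul_left _).smul_right _

theorem commute_HF_neg_dOp (i : ℕ+) (l : ℕ) : Commute (HF (-(i : ℕ))) (dOp false l) := by
  refine commute_expCoeff (fun j => ?_) l
  rcases j.eq_zero_or_pos with rfl | hj
  · simp [PowerSeries.coeff_zero_eq_constantCoeff_apply, constantCoeff_dSeries]
  lift j to ℕ+ using hj
  rw [coeff_dSeries_false, HF_neg_pnat]
  refine Commute.smul_right (LinearMap.ext fun f => ?_) _
  simp only [Module.End.mul_apply, LinearMap.mulLeft_apply, mul_left_comm]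

/-- How `H(m)` of `π` acts on the Fock factor of the charge-`p` sector `F ⊗ Λ ⊗ e^{pα}`. -/
noncomputable def HAtCharge (m p : ℤ) : EndF := if m = 0 then ((2 : ℂ) * p) • 1 else HF m

noncomputable def dcOp (lk : ℕ × ℕ) : EndF := dOp false lk.1 * cOp false lk.2

/-- `(m, 0)` for `m ≥ 0` and `(0, -m)` for `m < 0`: the shift of the summation index `(l, k)`
of `Y` caused by taking the commutator with `H(m)`. -/
def modeShift (m : ℤ) : ℕ × ℕ := (m.toNat, (-m).toNat)

theorem HAtCharge_mul_dcOp_sub (m p : ℤ) (lk : ℕ × ℕ) :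
    HAtCharge m (p - 1) * dcOp lk - dcOp lk * HAtCharge m p
      = if modeShift m ≤ lk then (-2 : ℂ) • dcOp (lk - modeShift m) else 0 := by
  obtain ⟨l, k⟩ := lk
  rcases lt_trichotomy m 0 with hm | rfl | hm
  · lift -m to ℕ+ using by omega with i hi
    obtain rfl : m = -(i : ℕ) := by omega
    simp only [HAtCharge, dcOp, modeShift, if_neg hm.ne, Prod.mk_le_mk, Prod.mk_sub_mk, neg_neg,
      Int.toNat_natCast, Int.toNat_eq_zero.mpr hm.le, zero_le, true_and, tsub_zero]
    rw [← mul_assoc, (commute_HF_neg_dOp i l).eq, mul_assoc, mul_assoc, ← mul_sub,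
      HF_neg_mul_cOp_sub]
    split_ifs
    · exact mul_smul_comm _ _ _
    · exact mul_zero _
  · simp only [HAtCharge, dcOp, modeShift, if_pos, Int.toNat_zero, neg_zero, Prod.mk_le_mk,
      zero_le, and_self, Prod.mk_sub_mk, tsub_zero, smul_mul_assoc, one_mul,
      mul_smul_comm, mul_one]
    push_cast
    module
  · lift m to ℕ using hm.le
    lift m to ℕ+ using by omega with i
    simp only [HAtCharge, dcOp, modeShift, if_neg hm.ne', Prod.mk_le_mk, Prod.mk_sub_mk,
      Int.toNat_natCast, Int.toNat_eq_zero.mpr (neg_nonpos.mpr hm.le), zero_le, and_true, tsub_zero]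
    rw [mul_assoc, ← (commute_HF_cOp i k).eq, ← mul_assoc, ← mul_assoc, ← sub_mul, HF_mul_dOp_sub]
    split_ifs
    · exact smul_mul_assoc _ _ _
    · exact zero_mul _

/-- Operators on the Fock space lowering the weight `Σ n aₙ` of every monomial by at least `k`. -/
def weightLowering (k : ℕ) : Submodule ℂ EndF where
  carrier := {e | ∀ f : Fock, ∀ μ ∈ (e f).support, ∃ ν ∈ f.support,
    Finsupp.weight (↑) μ + k ≤ Finsupp.weight ((↑) : ℕ+ → ℕ) ν}
  add_mem' {e₁ e₂} h₁ h₂ f μ hμ := by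
    rcases Finset.mem_union.mp (support_add hμ) with h | h
    exacts [h₁ f μ h, h₂ f μ h]
  zero_mem' f μ hμ := by simp at hμ
  smul_mem' c e h f μ hμ := h f μ (Finsupp.support_smul hμ)

theorem one_mem_weightLowering : (1 : EndF) ∈ weightLowering 0 :=
  fun _ μ hμ => ⟨μ, hμ, le_rfl⟩

theorem mul_mem_weightLowering {k₁ k₂ : ℕ} {e₁ e₂ : EndF} (h₁ : e₁ ∈ weightLowering k₁)
    (h₂ : e₂ ∈ weightLowering k₂) : e₁ * e₂ ∈ weightLowering (k₁ + k₂) := fun f μ hμ => by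
  obtain ⟨ν, hν, hμν⟩ := h₁ (e₂ f) μ hμ
  obtain ⟨ρ, hρ, hνρ⟩ := h₂ f ν hν
  exact ⟨ρ, hρ, by omega⟩

theorem pderiv_mem_weightLowering (i : ℕ+) :
    ((pderiv i).toLinearMap : EndF) ∈ weightLowering i := fun f μ hμ => by
  refine ⟨μ + Finsupp.single i 1, ?_, by simp [Finsupp.weight_single]⟩
  rw [mem_support_iff] at hμ ⊢
  exact left_ne_zero_of_mul (by rwa [← coeff_pderiv])

theorem coeff_cSeries_mem_weightLowering (ε : Bool) (k : ℕ) :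
    PowerSeries.coeff k (cSeries ε) ∈ weightLowering k := by
  rw [cSeries, PowerSeries.coeff_mk]
  split_ifs with hk
  · exact Submodule.smul_mem _ _ (Submodule.smul_mem _ _ (pderiv_mem_weightLowering ⟨k, hk⟩))
  · exact Submodule.zero_mem _

theorem coeff_cSeries_pow_mem_weightLowering (ε : Bool) (j k : ℕ) :
    PowerSeries.coeff k (cSeries ε ^ j) ∈ weightLowering k := by
  induction j generalizing k with
  | zero =>
    rw [pow_zero, PowerSeries.coeff_one]
    split_ifs with hk
    · exact hk ▸ one_mem_weightLowering
    · exact Submodule.zero_mem _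
  | succ j ih =>
    rw [pow_succ', PowerSeries.coeff_mul]
    refine Submodule.sum_mem _ fun ab hab => ?_
    rw [← Finset.HasAntidiagonal.mem_antidiagonal.mp hab]
    exact mul_mem_weightLowering (coeff_cSeries_mem_weightLowering ε _) (ih _)

theorem cOp_mem_weightLowering (ε : Bool) (k : ℕ) : cOp ε k ∈ weightLowering k :=
  Submodule.sum_mem _ fun j _ =>
    Submodule.smul_mem _ _ (coeff_cSeries_pow_mem_weightLowering ε j k)

theorem cOp_apply_eq_zero_of_lt {ε : Bool} {f : Fock} {k : ℕ}
    (hk : f.support.sup (Finsupp.weight (↑)) < k) : cOp ε k f = 0 := by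
  by_contra h
  obtain ⟨μ, hμ⟩ := Finset.nonempty_iff_ne_empty.mpr (mt support_eq_empty.mp h)
  obtain ⟨ν, hν, hμν⟩ := cOp_mem_weightLowering ε k f μ hμ
  have := Finset.le_sup (f := Finsupp.weight ((↑) : ℕ+ → ℕ)) hν
  omega

theorem AstarBasis_eq_zero_of_sup_lt {q : ℚ} {ST : Finset ℕ+ × Finset ℕ+}
    (hq : ((ST.1.sup (↑) : ℕ) : ℤ) < ⌊q⌋) : AstarBasis q ST = 0 := by
  simp only [AstarBasis]
  split_ifs with _ _ hs h₂ <;> try rfl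
  · have := Finset.le_sup (f := ((↑) : ℕ+ → ℕ)) hs
    simp only [PNat.mk_coe] at this
    omega
  · have : (0 : ℤ) ≤ (ST.1.sup (↑) : ℕ) := Int.natCast_nonneg _
    omega

section Embedding

variable (w : Wedge) (p : ℤ)

theorem emb_zero : emb w p 0 = 0 := by simp [emb]

theorem emb_zero_wedge (f : Fock) : emb 0 p f = 0 := Finsupp.sum_zero_index

theorem emb_add (f g : Fock) : emb w p (f + g) = emb w p f + emb w p g := by
  simp only [emb, smul_add, Finsupp.single_add, Finsupp.sum_add]

theorem emb_sub (f g : Fock) : emb w p (f - g) = emb w p f - emb w p g := by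
  simp only [emb, smul_sub, Finsupp.single_sub, Finsupp.sum_sub]

theorem emb_smul (c : ℂ) (f : Fock) : emb w p (c • f) = c • emb w p f := by
  simp only [emb, Finsupp.smul_sum, smul_comm _ c, Finsupp.smul_single]

end Embedding

theorem HVop_eq_liftAddHom (m : ℤ) :
    HVop m = ⇑(Finsupp.liftAddHom fun STp : (Finset ℕ+ × Finset ℕ+) × ℤ =>
      (Finsupp.singleAddHom STp).comp (HAtCharge m STp.2).toAddMonoidHom) := by
  ext1 u
  simp only [HVop, Finsupp.liftAddHom_apply, AddMonoidHom.coe_comp, LinearMap.toAddMonoidHom_coe,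
    HAtCharge]
  congr! 3
  split_ifs <;> rfl

theorem HVop_single (m : ℤ) (STp : (Finset ℕ+ × Finset ℕ+) × ℤ) (f : Fock) :
    HVop m (Finsupp.single STp f) = Finsupp.single STp (HAtCharge m STp.2 f) := by
  simp [HVop_eq_liftAddHom]

theorem HVop_emb (m : ℤ) (w : Wedge) (q : ℤ) (g : Fock) :
    HVop m (emb w q g) = emb w q (HAtCharge m q g) := by
  simp only [emb, HVop_eq_liftAddHom, Finsupp.sum, map_sum]
  refine Finset.sum_congr rfl fun ST _ => ?_
  simp [map_smul]

theorem HVop_zero (m : ℤ) : HVop m 0 = 0 := by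
  rw [HVop_eq_liftAddHom, map_zero]

theorem HVop_add (m : ℤ) (u v : VV) : HVop m (u + v) = HVop m u + HVop m v := by
  rw [HVop_eq_liftAddHom, map_add]

/-- The `(l, k)` summand `g ⊗ A*(n+l-k+p-1/2) v_{S,T} ⊗ e^{(p-1)α}` of `Y(n)` on the charge-`p`
sector, where `g` stands for `d⁻_l c⁻_k f`. -/
noncomputable def yComponent (n p : ℤ) (ST : Finset ℕ+ × Finset ℕ+) (lk : ℕ × ℕ) (g : Fock) : VV :=
  emb (AstarBasis ((n : ℚ) + lk.1 - lk.2 + p - 1 / 2) ST) (p - 1) g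

section yComponent

variable (n p : ℤ) (ST : Finset ℕ+ × Finset ℕ+) (lk : ℕ × ℕ)

theorem Yop_single (f : Fock) :
    Yop n (Finsupp.single (ST, p) f) = ∑ᶠ lk, yComponent n p ST lk (dcOp lk f) := by
  rw [Yop, Finsupp.sum_single_index (by simp [emb_zero])]
  rfl

theorem yComponent_sub (g h : Fock) :
    yComponent n p ST lk (g - h) = yComponent n p ST lk g - yComponent n p ST lk h :=
  emb_sub ..

theorem yComponent_smul (c : ℂ) (g : Fock) :
    yComponent n p ST lk (c • g) = c • yComponent n p ST lk g :=
  emb_smul ..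

theorem HVop_yComponent (m : ℤ) (g : Fock) :
    HVop m (yComponent n p ST lk g) = yComponent n p ST lk (HAtCharge m (p - 1) g) :=
  HVop_emb ..

theorem yComponent_add_modeShift (m : ℤ) (g : Fock) :
    yComponent n p ST (lk + modeShift m) g = yComponent (m + n) p ST lk g := by
  have hm : ((m.toNat : ℕ) : ℚ) - ((-m).toNat : ℕ) = m := by
    exact_mod_cast Int.toNat_sub_toNat_neg m
  simp only [yComponent, modeShift, Prod.fst_add, Prod.snd_add, Nat.cast_add, Int.cast_add]
  congr 2
  linear_combination hm

theorem hasFiniteSupport_yComponent_dcOp (f : Fock) :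
    Function.HasFiniteSupport fun lk => yComponent n p ST lk (dcOp lk f) := by
  set K : ℕ := f.support.sup (Finsupp.weight ((↑) : ℕ+ → ℕ))
  set L : ℕ := ((ST.1.sup (↑) : ℕ) + 1 + K - n - p : ℤ).toNat
  refine (Set.finite_Iic (L, K)).subset fun lk hlk => ?_
  rw [Function.mem_support] at hlk
  have hk : lk.2 ≤ K := by
    by_contra! hk
    rw [dcOp, Module.End.mul_apply, cOp_apply_eq_zero_of_lt hk, map_zero, yComponent,
      emb_zero] at hlk
    exact hlk rfl
  have hl : (n + lk.1 - lk.2 + p - 1 : ℤ) ≤ (ST.1.sup (↑) : ℕ) := by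
    by_contra! hl
    have hfloor : ⌊(n : ℚ) + lk.1 - lk.2 + p - 1 / 2⌋ = n + lk.1 - lk.2 + p - 1 := by
      rw [Int.floor_eq_iff]; push_cast; constructor <;> linarith
    rw [yComponent, AstarBasis_eq_zero_of_sup_lt (hfloor ▸ hl), emb_zero_wedge] at hlk
    exact hlk rfl
  exact Prod.mk_le_mk.mpr ⟨by omega, hk⟩

end yComponent

theorem HVop_finsum (m : ℤ) {F : ℕ × ℕ → VV} (hF : Function.HasFiniteSupport F) :
    HVop m (∑ᶠ lk, F lk) = ∑ᶠ lk, HVop m (F lk) := by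
  rw [HVop_eq_liftAddHom, map_finsum _ hF]

theorem Yop_add (n : ℤ) (u v : VV) : Yop n (u + v) = Yop n u + Yop n v := by
  refine Finsupp.sum_add_index' (fun STp => by simp [emb_zero]) fun STp f g => ?_
  simp only [map_add, emb_add]
  exact finsum_add_distrib (hasFiniteSupport_yComponent_dcOp n STp.2 STp.1 f)
    (hasFiniteSupport_yComponent_dcOp n STp.2 STp.1 g)

theorem HVop_Yop_single_sub (m n p : ℤ) (ST : Finset ℕ+ × Finset ℕ+) (f : Fock) :
    HVop m (Yop n (Finsupp.single (ST, p) f)) - Yop n (HVop m (Finsupp.single (ST, p) f))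
      = (-2 : ℂ) • Yop (m + n) (Finsupp.single (ST, p) f) := by
  have hfin := hasFiniteSupport_yComponent_dcOp n p ST
  have hcomm (lk : ℕ × ℕ) : HAtCharge m (p - 1) (dcOp lk f) - dcOp lk (HAtCharge m p f)
      = if modeShift m ≤ lk then (-2 : ℂ) • dcOp (lk - modeShift m) f else 0 := by
    have := LinearMap.congr_fun (HAtCharge_mul_dcOp_sub m p lk) f
    split_ifs at this ⊢ <;> exact this
  have hsupp : Function.support (fun lk => yComponent n p ST lk
      (if modeShift m ≤ lk then (-2 : ℂ) • dcOp (lk - modeShift m) f else 0))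
      ⊆ Set.range (· + modeShift m) := fun lk hlk => by
    by_cases h : modeShift m ≤ lk
    · exact ⟨lk - modeShift m, tsub_add_cancel_of_le h⟩
    · simp [h, yComponent, emb_zero] at hlk
  rw [HVop_single, Yop_single, Yop_single, Yop_single, HVop_finsum m (hfin f),
    ← finsum_sub_distrib ((hfin f).fun_comp (HVop_zero m)) (hfin _)]
  simp only [HVop_yComponent, ← yComponent_sub, hcomm]
  rw [finsum_eq_finsum_comp_of_support_subset_range (add_left_injective _) hsupp, smul_finsum]
  simp only [le_add_self, if_true, add_tsub_cancel_right, yComponent_smul, yComponent_add_modeShift]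

theorem statement8 (m n : ℤ) (u : VV) :
    HVop m (Yop n u) - Yop n (HVop m u) = (-2 : ℂ) • Yop (m + n) u := by
  induction u using Finsupp.induction_linear with
  | zero => simp [Yop, HVop]
  | add u v hu hv =>
    rw [Yop_add, HVop_add, HVop_add, Yop_add, Yop_add, smul_add, add_sub_add_comm, hu, hv]
  | single STp f => exact HVop_Yop_single_sub m n STp.2 STp.1 f
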